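/- Let k ≥ 1, ℓ ≥ 1, r with 1 ≤ r ≤ ℓ, t ≥ 1, and m = kℓ + r. For any copy P of the ℓ-blow-up of the k-path on (k+1)t vertices, with vertices listed in the blow-up order v_1,…,v_{ℓ(k+1)t}, there exists a copy B of the disjoint union of k+1 copies of the braid graph B(ℓ, r, t) on the same vertex set, edge-disjoint from P, such that the union P ∪ B contains the m-th power of the path on the sequence (v_1,…,v_{ℓ(k+1)t}); i.e., in P ∪ B, v_i is adjacent to v_j whenever 0 < |i − j| ≤ m. -/

import Mathlib

/-- The `ℓ`-blow-up of the `k`-path, on `N` vertices listed in blow-up order: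
vertex `i` lies in block `i / ℓ`, blocks are independent sets of size `ℓ`, and two
vertices are adjacent iff their blocks are distinct and at distance at most `k`. -/
def pathBlowup (k ℓ N : ℕ) : SimpleGraph (Fin N) where
  Adj i j := (i : ℕ) / ℓ ≠ (j : ℕ) / ℓ ∧
    ((((i : ℕ) / ℓ : ℕ) : ℤ) - (((j : ℕ) / ℓ : ℕ) : ℤ)).natAbs ≤ k
  symm := by
    constructor
    intro i j h
    exact ⟨Ne.symm h.1, by have := h.2; omega⟩
  loopless := by
    constructor
    intro i h
    exact h.1 rfl

/-- The braid graph `B(ℓ, r, t)` (see paper, Definition of the braid graph). -/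
def braid (ℓ r t : ℕ) : SimpleGraph (Fin t × Fin ℓ) where
  Adj x y :=
    (x.1 = y.1 ∧ x.2 ≠ y.2) ∨
    ((x.1 : ℕ) + 1 = (y.1 : ℕ) ∧ (y.2 : ℕ) + ℓ ≤ (x.2 : ℕ) + r) ∨
    ((y.1 : ℕ) + 1 = (x.1 : ℕ) ∧ (x.2 : ℕ) + ℓ ≤ (y.2 : ℕ) + r)
  symm := by
    constructor
    intro x y h
    rcases h with ⟨h1, h2⟩ | ⟨h1, h2⟩ | ⟨h1, h2⟩
    · exact Or.inl ⟨h1.symm, h2.symm⟩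
    · exact Or.inr (Or.inr ⟨h1, h2⟩)
    · exact Or.inr (Or.inl ⟨h1, h2⟩)
  loopless := by
    constructor
    intro x h
    rcases h with ⟨_, h⟩ | ⟨h, _⟩ | ⟨h, _⟩
    · exact h rfl
    · omega
    · omega

/-- The disjoint union of `k+1` copies of the braid graph `B(ℓ, r, t)`. -/
def braidCopies (k ℓ r t : ℕ) : SimpleGraph (Fin (k + 1) × (Fin t × Fin ℓ)) where
  Adj x y := x.1 = y.1 ∧ (braid ℓ r t).Adj x.2 y.2
  symm := ⟨fun x y h => ⟨h.1.symm, (braid ℓ r t).symm.symm _ _ h.2⟩⟩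
  loopless := ⟨fun x h => (braid ℓ r t).loopless.irrefl _ h.2⟩

/-!
Vertex `n` of the blow-up order lies in block `n / ℓ`. Declare block `b` to be clique
`b / (k + 1)` of braid copy `b % (k + 1)`. Then the cliques of the braids are exactly the blocks
and the bridges join blocks `k + 1` apart, while `P` only joins distinct blocks at distance at
most `k`; so the two graphs are edge-disjoint. A pair `i < j ≤ i + kℓ + r` lies in blocks at
distance at most `k + 1` (as `r ≤ ℓ`), and at distance exactly `k + 1` the bound
`j ≤ i + kℓ + r` is precisely the bridge condition.
-/

open SimpleGraph

lemma Nat.add_mul_eq_iff_mod_eq_and_div_add_eq {n : ℕ} (hn : 0 < n) (b c d : ℕ) :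
    b + n * d = c ↔ b % n = c % n ∧ b / n + d = c / n := by
  constructor
  · rintro rfl
    exact ⟨(Nat.add_mul_mod_self_left b n d).symm, (Nat.add_mul_div_left b d hn).symm⟩
  · rintro ⟨hmod, hdiv⟩
    rw [← Nat.mod_add_div c n, ← hmod, ← hdiv, mul_add, ← add_assoc, Nat.mod_add_div]

/-- Vertex `n` goes to position `n % ℓ` of clique `n / ℓ / (k + 1)` of copy `n / ℓ % (k + 1)`. -/
def blockLabel (k ℓ t : ℕ) : Fin (ℓ * ((k + 1) * t)) ≃ Fin (k + 1) × Fin t × Fin ℓ :=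
  (finCongr (by ring)).trans <| finProdFinEquiv.symm.trans <|
    (finProdFinEquiv.symm.prodCongr (Equiv.refl _)).trans <|
      ((Equiv.prodComm _ _).prodCongr (Equiv.refl _)).trans (Equiv.prodAssoc _ _ _)

section blockLabel

variable {k ℓ t : ℕ} (n : Fin (ℓ * ((k + 1) * t)))

@[simp] lemma blockLabel_fst_val : ((blockLabel k ℓ t n).1 : ℕ) = n / ℓ % (k + 1) := by
  simp [blockLabel]

@[simp] lemma blockLabel_snd_fst_val : ((blockLabel k ℓ t n).2.1 : ℕ) = n / ℓ / (k + 1) := by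
  simp [blockLabel]

@[simp] lemma blockLabel_snd_snd_val : ((blockLabel k ℓ t n).2.2 : ℕ) = n % ℓ := by
  simp [blockLabel]

end blockLabel

def braidCover (k ℓ r t : ℕ) : SimpleGraph (Fin (ℓ * ((k + 1) * t))) :=
  (braidCopies k ℓ r t).comap (blockLabel k ℓ t)

lemma braidCover_adj_iff {k ℓ r t : ℕ} {i j : Fin (ℓ * ((k + 1) * t))} :
    (braidCover k ℓ r t).Adj i j ↔
      (i / ℓ = j / ℓ ∧ i % ℓ ≠ j % ℓ) ∨
      (i / ℓ + (k + 1) = j / ℓ ∧ j % ℓ + ℓ ≤ i % ℓ + r) ∨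
      (j / ℓ + (k + 1) = i / ℓ ∧ i % ℓ + ℓ ≤ j % ℓ + r) := by
  have hblock := Nat.add_mul_eq_iff_mod_eq_and_div_add_eq k.add_one_pos
  have hsame (b c : ℕ) := by simpa using hblock b c 0
  have hbridge (b c : ℕ) := by simpa using hblock b c 1
  simp only [braidCover, comap_adj, braidCopies, braid, Fin.ext_iff, ne_eq, blockLabel_fst_val,
    blockLabel_snd_fst_val, blockLabel_snd_snd_val]
  rw [hsame (i / ℓ), hbridge (i / ℓ), hbridge (j / ℓ), eq_comm (a := (j : ℕ) / ℓ % (k + 1))]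
  tauto

lemma not_pathBlowup_adj_and_braidCover_adj {k ℓ r t : ℕ} (i j : Fin (ℓ * ((k + 1) * t))) :
    ¬((pathBlowup k ℓ _).Adj i j ∧ (braidCover k ℓ r t).Adj i j) := by
  rintro ⟨⟨hne, hdist⟩, hB⟩
  rw [braidCover_adj_iff] at hB
  omega

lemma pathBlowup_adj_or_braidCover_adj {k ℓ r t : ℕ} (hl : 0 < ℓ) (hr : r ≤ ℓ)
    {i j : Fin (ℓ * ((k + 1) * t))} (hij : (i : ℕ) < j) (hji : (j : ℕ) ≤ i + (k * ℓ + r)) :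
    (pathBlowup k ℓ _).Adj i j ∨ (braidCover k ℓ r t).Adj i j := by
  rw [braidCover_adj_iff]
  have hi := Nat.div_add_mod i ℓ
  have hj := Nat.div_add_mod j ℓ
  have hpi := Nat.mod_lt i hl
  have hpj := Nat.mod_lt j hl
  have hlo : (i : ℕ) / ℓ ≤ j / ℓ := Nat.div_le_div_right hij.le
  have hhi : (j : ℕ) / ℓ < i / ℓ + (k + 2) := (Nat.div_lt_iff_lt_mul hl).2 (by nlinarith)
  by_cases hsame : (i : ℕ) / ℓ = j / ℓ
  · rw [← hsame] at hj
    exact .inr (.inl ⟨hsame, by omega⟩)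
  by_cases hbridge : (i : ℕ) / ℓ + (k + 1) = j / ℓ
  · rw [← hbridge] at hj
    exact .inr (.inr (.inl ⟨hbridge, by nlinarith⟩))
  exact .inl ⟨hsame, by omega⟩

theorem stmt10_general (k ℓ r t : ℕ) (hl : 1 ≤ ℓ) (hr2 : r ≤ ℓ) :
    ∃ B : SimpleGraph (Fin (ℓ * ((k + 1) * t))),
      (∀ i j, ¬((pathBlowup k ℓ (ℓ * ((k + 1) * t))).Adj i j ∧ B.Adj i j)) ∧
      Nonempty (B ≃g braidCopies k ℓ r t) ∧
      (∀ i j : Fin (ℓ * ((k + 1) * t)), (i : ℕ) < (j : ℕ) →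
        (j : ℕ) ≤ (i : ℕ) + (k * ℓ + r) →
        (pathBlowup k ℓ (ℓ * ((k + 1) * t))).Adj i j ∨ B.Adj i j) :=
  ⟨braidCover k ℓ r t, not_pathBlowup_adj_and_braidCover_adj, ⟨Iso.comap _ _⟩,
    fun _ _ => pathBlowup_adj_or_braidCover_adj hl hr2⟩

/-- For any copy `P` of the `ℓ`-blow-up of the `k`-path on `(k+1)t` vertices, there is
a copy `B` of `(k+1)·B(ℓ,r,t)` on the same vertex set, edge-disjoint from `P`, such
that in `P ∪ B` any two vertices at distance at most `m = kℓ + r` in the blow-up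
order are adjacent (i.e. `P ∪ B` contains the `m`-th power of the path). -/
theorem stmt10 (k ℓ r t : ℕ) (hk : 1 ≤ k) (hl : 1 ≤ ℓ) (hr1 : 1 ≤ r) (hr2 : r ≤ ℓ)
    (ht : 1 ≤ t) :
    ∃ B : SimpleGraph (Fin (ℓ * ((k + 1) * t))),
      (∀ i j, ¬((pathBlowup k ℓ (ℓ * ((k + 1) * t))).Adj i j ∧ B.Adj i j)) ∧
      Nonempty (B ≃g braidCopies k ℓ r t) ∧
      (∀ i j : Fin (ℓ * ((k + 1) * t)), (i : ℕ) < (j : ℕ) →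
        (j : ℕ) ≤ (i : ℕ) + (k * ℓ + r) →
        (pathBlowup k ℓ (ℓ * ((k + 1) * t))).Adj i j ∨ B.Adj i j) :=
  stmt10_general k ℓ r t hl hr2
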